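/- arXiv:math/0605101 — 5 statements merged into one kernel-verified Lean document; each statement's English description precedes it below -/
import Mathlib

section
/- Let G be a finite abelian group and f : G → ℂ any function. Then the determinant of the G × G matrix whose (g,h) entry is f(g · h⁻¹) equals the product, over all group homomorphisms χ : G → ℂ^×, of the sum Σ_{g ∈ G} χ(g) · f(g). -/
/-- Frobenius determinant formula. For a finite abelian group `G` and any
function `f : G → ℂ`, the determinant of the `G × G` matrix with `(g, h)` entry `f (g * h⁻¹)`
equals the product over all characters `χ : G →* ℂˣ` of `∑ g, χ g * f g`. -/
theorem frobenius_determinant (G : Type*) [CommGroup G] [Fintype G] [DecidableEq G]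
    (f : G → ℂ) :
    (Matrix.of fun g h : G => f (g * h⁻¹)).det =
      ∏ᶠ χ : G →* ℂˣ, ∑ g : G, (χ g : ℂ) * f g := by
  classical
  have hexp : Monoid.exponent G ≠ 0 := Monoid.exponent_ne_zero_of_finite
  have : NeZero ((Monoid.exponent G : ℂ)) := ⟨Nat.cast_ne_zero.mpr hexp⟩
  obtain ⟨e⟩ := CommGroup.monoidHom_mulEquiv_of_hasEnoughRootsOfUnity G ℂ
  have : Fintype (G →* ℂˣ) := Fintype.ofEquiv G e.symm.toEquiv
  set M : Matrix G G ℂ := Matrix.of fun g h : G => f (g * h⁻¹) with hM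
  set U : Matrix G G ℂ := Matrix.of fun g h : G => ((e.symm h) g : ℂ) with hU
  set lam : (G →* ℂˣ) → ℂ := fun χ => ∑ k : G, ((χ k : ℂ))⁻¹ * f k with hlam
  set D : Matrix G G ℂ := Matrix.diagonal fun h => lam (e.symm h) with hD
  have key : M * U = U * D := by
    ext g h
    rw [Matrix.mul_apply, Matrix.mul_diagonal]
    set χ := e.symm h with hχ
    have step : ∀ k : G, M g (g * k⁻¹) * U (g * k⁻¹) h
        = (((χ k : ℂ))⁻¹ * f k) * (χ g : ℂ) := by
      intro k
      have h1 : g * (g * k⁻¹)⁻¹ = k := by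
        rw [mul_inv_rev, inv_inv, mul_comm k g⁻¹, mul_inv_cancel_left]
      have h2 : (χ (g * k⁻¹) : ℂ) = (χ g : ℂ) * ((χ k : ℂ))⁻¹ := by
        rw [map_mul, map_inv, Units.val_mul]
        simp [Units.val_inv_eq_inv_val]
      simp only [hM, hU, Matrix.of_apply, h1, ← hχ, h2]
      ring
    calc ∑ x : G, M g x * U x h
        = ∑ k : G, M g (g * k⁻¹) * U (g * k⁻¹) h := by
          refine (Fintype.sum_equiv ((Equiv.inv G).trans (Equiv.mulLeft g)) _ _ ?_).symm
          intro k
          simp [Equiv.mulLeft]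
      _ = ∑ k : G, (((χ k : ℂ))⁻¹ * f k) * (χ g : ℂ) := by
          exact Finset.sum_congr rfl fun k _ => step k
      _ = U g h * lam χ := by
          rw [← Finset.sum_mul, hU, hlam]
          simp only [Matrix.of_apply, ← hχ]
          ring
  have hli : LinearIndependent ℂ (fun χ : G →* ℂˣ => (fun g => (χ g : ℂ))) := by
    refine (linearIndependent_monoidHom G ℂ).comp
      (fun χ : G →* ℂˣ => (Units.coeHom ℂ).comp χ) ?_
    intro χ₁ χ₂ h
    ext g
    have := DFunLike.congr_fun h g
    exact this
  have hUunit : IsUnit U := by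
    rw [← Matrix.linearIndependent_cols_iff_isUnit]
    exact hli.comp e.symm e.symm.injective
  have hUdet : U.det ≠ 0 := by
    have := (Matrix.isUnit_iff_isUnit_det U).mp hUunit
    exact this.ne_zero
  have hMdet : M.det = D.det := by
    have hdet : M.det * U.det = D.det * U.det := by
      rw [← Matrix.det_mul, key, Matrix.det_mul, mul_comm]
    exact mul_right_cancel₀ hUdet hdet
  rw [hMdet, hD, Matrix.det_diagonal, finprod_eq_prod_of_fintype]
  calc ∏ h : G, lam (e.symm h)
      = ∏ χ : G →* ℂˣ, lam χ := Equiv.prod_comp e.symm.toEquiv lam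
    _ = ∏ χ : G →* ℂˣ, ∑ g : G, ((χ⁻¹ : G →* ℂˣ) g : ℂ) * f g := by
        refine Finset.prod_congr rfl fun χ _ => ?_
        simp [hlam, Units.val_inv_eq_inv_val]
    _ = ∏ χ : G →* ℂˣ, ∑ g : G, (χ g : ℂ) * f g :=
        Equiv.prod_comp (Equiv.inv (G →* ℂˣ)) fun χ => ∑ g : G, (χ g : ℂ) * f g
end

section
/- Let K be a number field, C an ideal class of 𝓞_K, and 𝔞₁ a nonzero integral ideal of 𝓞_K whose ideal class is C⁻¹. The map sending a nonzero element α ∈ 𝔞₁ to the unique ideal I of 𝓞_K with I · 𝔞₁ = α𝓞_K descends to a well-defined bijection from the set of orbits of the unit group 𝓞_K^× acting by multiplication on the nonzero elements of 𝔞₁ onto the set of nonzero integral ideals of 𝓞_K whose ideal class is C. -/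
open NumberField
open scoped nonZeroDivisors

/-!
For `α ∈ 𝔞` nonzero, `𝔞 ∣ (α)`, and the cofactor `I` of `(α) = I𝔞` has class `[𝔞]⁻¹ = C`
because `(α)` is principal. Ideals of a Dedekind domain cancel, so `I` determines `(α)`, i.e. `α`
up to a unit. Conversely, for `J` of class `C` the ideal `J𝔞` is principal, say `(α)`, and then
`α ∈ 𝔞` is nonzero with cofactor `J`.
-/

namespace Ideal

variable {R : Type*} [CommRing R] [IsDedekindDomain R] {𝔞 : Ideal R}

noncomputable def cofactor (a : {x : R // x ∈ 𝔞 ∧ x ≠ 0}) : Ideal R :=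
  (dvd_span_singleton.mpr a.2.1).choose

theorem cofactor_mul (a : {x : R // x ∈ 𝔞 ∧ x ≠ 0}) : cofactor a * 𝔞 = span {a.1} :=
  (mul_comm _ _).trans (dvd_span_singleton.mpr a.2.1).choose_spec.symm

theorem cofactor_ne_zero (a : {x : R // x ∈ 𝔞 ∧ x ≠ 0}) : cofactor a ≠ 0 := by
  intro h
  have := cofactor_mul a
  rw [h, zero_mul, eq_comm, zero_eq_bot, span_singleton_eq_bot] at this
  exact a.2.2 this

theorem cofactor_eq_cofactor_iff (h𝔞 : 𝔞 ≠ 0) {a b : {x : R // x ∈ 𝔞 ∧ x ≠ 0}} :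
    cofactor a = cofactor b ↔ ∃ u : Rˣ, (u : R) * a.1 = b.1 := by
  rw [← (mul_left_injective₀ h𝔞).eq_iff, cofactor_mul, cofactor_mul,
    span_singleton_eq_span_singleton]
  exact exists_congr fun u => by rw [mul_comm]

theorem exists_cofactor_eq {J : Ideal R} (hJ : J ≠ 0) (h𝔞 : 𝔞 ≠ 0) {α : R}
    (hα : J * 𝔞 = span {α}) : ∃ a : {x : R // x ∈ 𝔞 ∧ x ≠ 0}, cofactor a = J := by
  have hα𝔞 : α ∈ 𝔞 := mul_le_right (show α ∈ J * 𝔞 by rw [hα]; exact mem_span_singleton_self α)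
  have hα0 : α ≠ 0 := by
    rintro rfl
    rw [span_singleton_eq_bot.mpr rfl, ← zero_eq_bot] at hα
    exact mul_ne_zero hJ h𝔞 hα
  exact ⟨⟨α, hα𝔞, hα0⟩, mul_right_cancel₀ h𝔞 ((cofactor_mul _).trans hα.symm)⟩

end Ideal

namespace ClassGroup

open Ideal

variable {R : Type*} [CommRing R] [IsDedekindDomain R] (𝔞 : (Ideal R)⁰)

noncomputable def cofactorOfInvClass (a : {x : R // x ∈ (𝔞 : Ideal R) ∧ x ≠ 0}) :
    {I : (Ideal R)⁰ // mk0 I = (mk0 𝔞)⁻¹} :=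
  ⟨⟨cofactor a, mem_nonZeroDivisors_of_ne_zero (cofactor_ne_zero a)⟩,
    mk0_eq_mk0_inv_iff.mpr ⟨a.1, a.2.2, cofactor_mul a⟩⟩

theorem cofactorOfInvClass_eq_iff {a b : {x : R // x ∈ (𝔞 : Ideal R) ∧ x ≠ 0}} :
    cofactorOfInvClass 𝔞 a = cofactorOfInvClass 𝔞 b ↔ ∃ u : Rˣ, (u : R) * a.1 = b.1 := by
  rw [← cofactor_eq_cofactor_iff (nonZeroDivisors.coe_ne_zero 𝔞), Subtype.ext_iff,
    Subtype.ext_iff]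
  rfl

theorem cofactorOfInvClass_surjective : Function.Surjective (cofactorOfInvClass 𝔞) := by
  rintro ⟨J, hJ⟩
  obtain ⟨α, -, hα⟩ := mk0_eq_mk0_inv_iff.mp hJ
  obtain ⟨a, ha⟩ := exists_cofactor_eq (nonZeroDivisors.coe_ne_zero J)
    (nonZeroDivisors.coe_ne_zero 𝔞) hα
  exact ⟨a, Subtype.ext (Subtype.ext ha)⟩

noncomputable def unitOrbitsEquivIdealsOfInvClass :
    Quot (fun a b : {x : R // x ∈ (𝔞 : Ideal R) ∧ x ≠ 0} => ∃ u : Rˣ, (u : R) * a.1 = b.1) ≃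
      {I : (Ideal R)⁰ // mk0 I = (mk0 𝔞)⁻¹} :=
  (Quot.congrRight fun _ _ => (cofactorOfInvClass_eq_iff 𝔞).symm).trans
    (Setoid.quotientKerEquivOfSurjective _ (cofactorOfInvClass_surjective 𝔞))

theorem unitOrbitsEquivIdealsOfInvClass_mk (a : {x : R // x ∈ (𝔞 : Ideal R) ∧ x ≠ 0}) :
    unitOrbitsEquivIdealsOfInvClass 𝔞 (Quot.mk _ a) = cofactorOfInvClass 𝔞 a :=
  rfl

end ClassGroup

/-- Let `K` be a number field, `C` an ideal class of `𝓞 K`, and `𝔞₁` a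
nonzero integral ideal of class `C⁻¹`. The map sending a nonzero `α ∈ 𝔞₁` to the unique ideal
`I` with `I * 𝔞₁ = (α)` descends to a bijection from the orbits of the unit group `(𝓞 K)ˣ`
acting on the nonzero elements of `𝔞₁` onto the set of nonzero integral ideals of class `C`. -/
theorem unit_orbits_equiv_ideals_of_class
    (K : Type*) [Field K] [NumberField K]
    (C : ClassGroup (𝓞 K)) (𝔞₁ : Ideal (𝓞 K)) (h₁ : 𝔞₁ ≠ 0)
    (hC : ClassGroup.mk0 ⟨𝔞₁, mem_nonZeroDivisors_of_ne_zero h₁⟩ = C⁻¹) :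
    ∃ e : Quot (fun a b : {x : 𝓞 K // x ∈ 𝔞₁ ∧ x ≠ 0} =>
        ∃ u : (𝓞 K)ˣ, (u : 𝓞 K) * a.1 = b.1) ≃
          {I : (Ideal (𝓞 K))⁰ // ClassGroup.mk0 I = C},
      ∀ a : {x : 𝓞 K // x ∈ 𝔞₁ ∧ x ≠ 0},
        ((e (Quot.mk _ a)).1 : Ideal (𝓞 K)) * 𝔞₁ = Ideal.span {a.1} := by
  obtain rfl : C = (ClassGroup.mk0 ⟨𝔞₁, mem_nonZeroDivisors_of_ne_zero h₁⟩)⁻¹ :=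
    inv_eq_iff_eq_inv.mp hC.symm
  refine ⟨ClassGroup.unitOrbitsEquivIdealsOfInvClass ⟨𝔞₁, mem_nonZeroDivisors_of_ne_zero h₁⟩,
    fun a => ?_⟩
  rw [ClassGroup.unitOrbitsEquivIdealsOfInvClass_mk]
  exact Ideal.cofactor_mul a
end

section
/- Let τ ∈ ℂ with Im τ > 0 and let f : ℂ → ℂ be an entire (everywhere complex-differentiable) function satisfying f(z+1) = f(z) and f(z+τ) = −e^{−2πiz} f(z) for all z ∈ ℂ. Then there exists a constant c ∈ ℂ such that f(z) = c · φ(τ, z) for all z ∈ ℂ. -/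
/-- The theta-like function
`φ(τ, z) = (q_z − 1) · ∏_{n ≥ 1} (1 − qⁿ q_z)(1 − qⁿ q_z⁻¹)`,
where `q = e^{2πiτ}` and `q_z = e^{2πiz}`. -/
noncomputable def phi (τ z : ℂ) : ℂ :=
  (Complex.exp (2 * Real.pi * Complex.I * z) - 1) *
    ∏' n : ℕ,
      ((1 - Complex.exp (2 * Real.pi * Complex.I * τ) ^ (n + 1) *
          Complex.exp (2 * Real.pi * Complex.I * z)) *
        (1 - Complex.exp (2 * Real.pi * Complex.I * τ) ^ (n + 1) *
          (Complex.exp (2 * Real.pi * Complex.I * z))⁻¹))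

/-!
Write `a_n(f) = ∫₀¹ f(x) e^{-2πinx} dx` for an entire `1`-periodic `f`. By Cauchy's theorem on a
rectangle the same integral along any horizontal segment of length one gives `a_n(f)`; along the
segment through `τ` the quasi-periodicity turns it into `a_n(f) = -e^{-2πinτ} a_{n+1}(f)`. So all
Fourier coefficients of `f`, on every horizontal line, vanish as soon as `a_0(f)` does, and then
`f = 0`. The function `φ(τ, ·)` satisfies the same functional equations, because
`(qw; q)_∞ = (1 - qw) (q²w; q)_∞`, and `φ(τ, 1/2) ≠ 0`; hence `a_0(φ) ≠ 0` and
`f - (a_0(f) / a_0(φ)) φ = 0`.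
-/

open Complex Function MeasureTheory intervalIntegral
open scoped Real

lemma integral_comp_add_eq_of_periodic {g : ℂ → ℂ} (hg : Differentiable ℂ g)
    (hper : Periodic g 1) (w : ℂ) :
    ∫ x in (0:ℝ)..1, g (x + w) = ∫ x in (0:ℝ)..1, g x := by
  have vertical : ∀ t : ℝ, ∫ x in (0:ℝ)..1, g (x + t * I) = ∫ x in (0:ℝ)..1, g x := by
    intro t
    have h := integral_boundary_rect_eq_zero_of_differentiableOn g 0 (1 + t * I)
      hg.differentiableOn
    have side : ∀ y : ℝ, g (1 + y * I) = g (y * I) := fun y => by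
      rw [add_comm, hper]
    rw [eq_comm, ← sub_eq_zero]
    simpa [side] using h
  have horizontal : Periodic (fun x : ℝ => g (x + w.im * I)) 1 := fun x => by
    simpa [add_right_comm] using hper (x + w.im * I)
  calc ∫ x in (0:ℝ)..1, g (x + w)
      = ∫ x in (0:ℝ)..1, g ((x + w.re : ℝ) + w.im * I) := by
        simp_rw [ofReal_add, add_assoc, re_add_im]
    _ = ∫ x in w.re..w.re + 1, g (x + w.im * I) := by
        rw [integral_comp_add_right (fun x : ℝ => g (x + w.im * I)), zero_add, add_comm]
    _ = ∫ x in (0:ℝ)..1, g (x + w.im * I) := by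
        simpa using horizontal.intervalIntegral_add_eq w.re 0
    _ = _ := vertical w.im

lemma AddCircle.eq_zero_of_fourierCoeff_eq_zero {T : ℝ} [Fact (0 < T)] {g : C(AddCircle T, ℂ)}
    (hg : ∀ n, fourierCoeff g n = 0) : g = 0 := by
  refine ContinuousMap.toLp_injective (p := 2) (E := ℂ) (𝕜 := ℂ) haarAddCircle ?_
  rw [map_zero, ← fourierBasis.repr.map_eq_zero_iff]
  ext n
  rw [fourierBasis_repr, fourierCoeff_toLp, hg, lp.coeFn_zero, Pi.zero_apply]

lemma Function.Periodic.eq_zero_of_integral_mul_exp_eq_zero {G : ℝ → ℂ} (hc : Continuous G)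
    (hp : Periodic G 1) (h : ∀ n : ℤ, ∫ x in (0:ℝ)..1, G x * cexp (-(2 * π * I * n * x)) = 0) :
    G = 0 := by
  have : Fact ((0 : ℝ) < 1) := ⟨one_pos⟩
  let g : C(AddCircle (1 : ℝ), ℂ) := ⟨hp.lift, continuous_coinduced_dom.mpr hc⟩
  have hg : g = 0 := AddCircle.eq_zero_of_fourierCoeff_eq_zero fun n => by
    rw [fourierCoeff_eq_intervalIntegral _ n 0, zero_add, ← h n]
    simp [g, ← exp_conj, map_ofNat, mul_comm]
  funext x
  simpa [g] using DFunLike.congr_fun hg (x : AddCircle (1 : ℝ))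

/-- The infinite `q`-Pochhammer symbol `(q w; q)_∞`. -/
noncomputable def qPochhammer (q w : ℂ) : ℂ := ∏' n : ℕ, (1 - q ^ (n + 1) * w)

section qPochhammer

variable {q : ℂ} (hq : ‖q‖ < 1)
include hq

lemma summable_norm_pow_succ_mul (w : ℂ) : Summable fun n : ℕ => ‖q ^ (n + 1) * w‖ := by
  simpa [norm_mul, norm_pow] using
    ((summable_nat_add_iff 1).mpr (summable_geometric_of_lt_one (norm_nonneg q) hq)).mul_right ‖w‖

lemma multipliable_one_sub_pow_succ_mul (w : ℂ) :
    Multipliable fun n : ℕ => 1 - q ^ (n + 1) * w := by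
  simp_rw [sub_eq_add_neg]
  exact multipliable_one_add_of_summable (by simpa using summable_norm_pow_succ_mul hq w)

lemma qPochhammer_ne_zero {w : ℂ} (hw : ∀ n : ℕ, 1 - q ^ (n + 1) * w ≠ 0) :
    qPochhammer q w ≠ 0 := by
  simp_rw [qPochhammer, sub_eq_add_neg] at hw ⊢
  exact tprod_one_add_ne_zero_of_summable hw (by simpa using summable_norm_pow_succ_mul hq w)

lemma qPochhammer_eq_one_sub_mul_mul (w : ℂ) :
    qPochhammer q w = (1 - q * w) * qPochhammer q (q * w) := by
  have hmul : Multipliable fun n : ℕ => 1 - q ^ (n + 1 + 1) * w := by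
    simpa [pow_succ, mul_assoc, mul_left_comm] using multipliable_one_sub_pow_succ_mul hq (q * w)
  rw [qPochhammer, tprod_eq_zero_mul' (f := fun n : ℕ => 1 - q ^ (n + 1) * w) hmul, qPochhammer]
  simp [pow_succ, mul_assoc, mul_left_comm]

lemma differentiable_qPochhammer : Differentiable ℂ (qPochhammer q) := by
  intro w₀
  set R := ‖w₀‖ + 1
  have hprod : HasProdLocallyUniformlyOn (fun n w => 1 + -(q ^ (n + 1) * w)) (qPochhammer q)
      (Metric.ball (0 : ℂ) R) := by
    have : qPochhammer q = fun w => ∏' n : ℕ, (1 + -(q ^ (n + 1) * w)) := by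
      ext w; simp_rw [qPochhammer, sub_eq_add_neg]
    rw [this]
    refine ((summable_norm_pow_succ_mul hq R).hasProdLocallyUniformlyOn_nat_one_add
      Metric.isOpen_ball (Filter.Eventually.of_forall fun n w hw => ?_) (fun n => by fun_prop))
    rw [norm_neg, norm_mul, norm_mul, Complex.norm_real, Real.norm_of_nonneg (by positivity)]
    exact mul_le_mul_of_nonneg_left (mem_ball_zero_iff.mp hw).le (norm_nonneg _)
  have hpartial : ∀ s : Finset ℕ, DifferentiableOn ℂ (fun w => ∏ n ∈ s, (1 + -(q ^ (n + 1) * w)))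
      (Metric.ball 0 R) := fun s => by fun_prop
  exact (hprod.differentiableOn (.of_forall hpartial) Metric.isOpen_ball).differentiableAt
    (Metric.isOpen_ball.mem_nhds (by simp [R]))

end qPochhammer

noncomputable def unitFourierCoeff (f : ℂ → ℂ) (n : ℤ) : ℂ :=
  ∫ x in (0:ℝ)..1, f x * cexp (-(2 * π * I * n * x))

section unitFourierCoeff

variable {f : ℂ → ℂ} (hf : Differentiable ℂ f) (hp : Periodic f 1)
include hf hp

lemma integral_comp_add_mul_exp_eq_unitFourierCoeff (n : ℤ) (w : ℂ) :
    ∫ x in (0:ℝ)..1, f (x + w) * cexp (-(2 * π * I * n * (x + w))) = unitFourierCoeff f n := by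
  have hexp (z : ℂ) : cexp (-(2 * π * I * n * (z + 1))) = cexp (-(2 * π * I * n * z)) := by
    rw [show -(2 * π * I * n * (z + 1)) = -(2 * π * I * n * z) + (-n : ℤ) * (2 * π * I) by
      push_cast; ring, exp_add, exp_int_mul_two_pi_mul_I, mul_one]
  exact integral_comp_add_eq_of_periodic (g := fun z => f z * cexp (-(2 * π * I * n * z)))
    (by fun_prop) (fun z => by simp only [hp z, hexp]) w

lemma eq_zero_of_unitFourierCoeff_eq_zero (h : ∀ n, unitFourierCoeff f n = 0) : f = 0 := by
  funext z
  have hG : Periodic (fun x : ℝ => f (x + z.im * I)) 1 := fun x => by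
    simpa [add_right_comm] using hp (x + z.im * I)
  -- On the line through `z.im * I` the `n`-th coefficient is `a_n(f) e^{2πn z.im} = 0`.
  have hcoeff (n : ℤ) :
      ∫ x in (0:ℝ)..1, f (x + z.im * I) * cexp (-(2 * π * I * n * x)) = 0 := by
    have hw := integral_comp_add_mul_exp_eq_unitFourierCoeff hf hp n (z.im * I)
    simp_rw [h n, mul_add, neg_add, exp_add, ← mul_assoc, intervalIntegral.integral_mul_const] at hw
    exact (mul_eq_zero.mp hw).resolve_right (exp_ne_zero _)
  have hG0 := hG.eq_zero_of_integral_mul_exp_eq_zero (hf.continuous.comp (by fun_prop)) hcoeff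
  simpa using congrFun hG0 z.re

end unitFourierCoeff

lemma unitFourierCoeff_sub_const_mul {f g : ℂ → ℂ} (hf : Continuous f) (hg : Continuous g)
    (c : ℂ) (n : ℤ) :
    unitFourierCoeff (fun z => f z - c * g z) n =
      unitFourierCoeff f n - c * unitFourierCoeff g n := by
  simp only [unitFourierCoeff, sub_mul, mul_assoc c]
  rw [intervalIntegral.integral_sub ((by fun_prop : Continuous _).intervalIntegrable _ _)
    ((by fun_prop : Continuous _).intervalIntegrable _ _), intervalIntegral.integral_const_mul]

structure IsThetaFunction (τ : ℂ) (f : ℂ → ℂ) : Prop where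
  differentiable : Differentiable ℂ f
  periodic : Periodic f 1
  add_tau : ∀ z, f (z + τ) = -cexp (-(2 * π * I * z)) * f z

namespace IsThetaFunction

variable {τ : ℂ} {f : ℂ → ℂ}

lemma sub_const_mul {g : ℂ → ℂ} (hf : IsThetaFunction τ f) (hg : IsThetaFunction τ g) (c : ℂ) :
    IsThetaFunction τ (fun z => f z - c * g z) where
  differentiable := hf.differentiable.sub (hg.differentiable.const_mul c)
  periodic z := by simp only [hf.periodic z, hg.periodic z]
  add_tau z := by rw [hf.add_tau, hg.add_tau]; ring

lemma unitFourierCoeff_eq_neg_exp_mul (hf : IsThetaFunction τ f) (n : ℤ) :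
    unitFourierCoeff f n = -cexp (-(2 * π * I * n * τ)) * unitFourierCoeff f (n + 1) := by
  rw [← integral_comp_add_mul_exp_eq_unitFourierCoeff hf.differentiable hf.periodic n τ,
    unitFourierCoeff, ← intervalIntegral.integral_const_mul]
  refine integral_congr fun x _ => ?_
  have hexp : cexp (-(2 * π * I * x)) * cexp (-(2 * π * I * n * (x + τ))) =
      cexp (-(2 * π * I * n * τ)) * cexp (-(2 * π * I * ↑(n + 1) * x)) := by
    rw [← exp_add, ← exp_add]
    push_cast
    ring_nf
  simp only [hf.add_tau]
  linear_combination (-f x) * hexp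

lemma eq_zero_of_unitFourierCoeff_zero_eq_zero (hf : IsThetaFunction τ f)
    (h0 : unitFourierCoeff f 0 = 0) : f = 0 := by
  refine eq_zero_of_unitFourierCoeff_eq_zero hf.differentiable hf.periodic fun n => ?_
  induction n using Int.induction_on with
  | zero => exact h0
  | succ k ih =>
    have h := hf.unitFourierCoeff_eq_neg_exp_mul k
    rw [ih, eq_comm, mul_eq_zero] at h
    exact h.resolve_left (neg_ne_zero.mpr (exp_ne_zero _))
  | pred k ih =>
    have h := hf.unitFourierCoeff_eq_neg_exp_mul (-k - 1)
    rwa [sub_add_cancel, ih, mul_zero] at h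

end IsThetaFunction

lemma phi_add_one (τ z : ℂ) : phi τ (z + 1) = phi τ z := by
  simp only [phi, mul_add, mul_one, exp_add, exp_two_pi_mul_I]

section phi

variable {τ : ℂ} (hτ : 0 < τ.im)
include hτ

lemma norm_exp_two_pi_I_mul_lt_one : ‖cexp (2 * π * I * τ)‖ < 1 :=
  UpperHalfPlane.norm_exp_two_pi_I_lt_one ⟨τ, hτ⟩

lemma phi_eq_qPochhammer (z : ℂ) :
    phi τ z = (cexp (2 * π * I * z) - 1) *
      (qPochhammer (cexp (2 * π * I * τ)) (cexp (2 * π * I * z)) *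
        qPochhammer (cexp (2 * π * I * τ)) (cexp (2 * π * I * z))⁻¹) := by
  have hq := norm_exp_two_pi_I_mul_lt_one hτ
  rw [phi, qPochhammer, qPochhammer, ← (multipliable_one_sub_pow_succ_mul hq _).tprod_mul
    (multipliable_one_sub_pow_succ_mul hq _)]

lemma phi_add (z : ℂ) : phi τ (z + τ) = -cexp (-(2 * π * I * z)) * phi τ z := by
  have hq := norm_exp_two_pi_I_mul_lt_one hτ
  rw [phi_eq_qPochhammer hτ, phi_eq_qPochhammer hτ, exp_neg,
    show 2 * π * I * (z + τ) = 2 * π * I * τ + 2 * π * I * z by ring, exp_add]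
  set q := cexp (2 * π * I * τ)
  set w := cexp (2 * π * I * z)
  have hq0 : q ≠ 0 := exp_ne_zero _
  have hw0 : w ≠ 0 := exp_ne_zero _
  rw [qPochhammer_eq_one_sub_mul_mul hq w, qPochhammer_eq_one_sub_mul_mul hq (q * w)⁻¹,
    show q * (q * w)⁻¹ = w⁻¹ by field_simp]
  field_simp
  ring

lemma differentiable_phi : Differentiable ℂ (phi τ) := by
  have hP := differentiable_qPochhammer (norm_exp_two_pi_I_mul_lt_one hτ)
  rw [funext (phi_eq_qPochhammer hτ)]
  simp_rw [← exp_neg]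
  fun_prop

lemma phi_one_half_ne_zero : phi τ (1 / 2) ≠ 0 := by
  have hq := norm_exp_two_pi_I_mul_lt_one hτ
  have hP : qPochhammer (cexp (2 * π * I * τ)) (-1) ≠ 0 := by
    refine qPochhammer_ne_zero hq fun n h => ?_
    have : ‖cexp (2 * π * I * τ) ^ (n + 1)‖ = 1 := by
      rw [show cexp (2 * π * I * τ) ^ (n + 1) = -1 by linear_combination h, norm_neg, norm_one]
    exact (pow_lt_one₀ (norm_nonneg _) hq n.succ_ne_zero).ne (by rwa [← norm_pow])
  rw [phi_eq_qPochhammer hτ, show 2 * π * I * (1 / 2 : ℂ) = π * I by ring, exp_pi_mul_I,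
    inv_neg_one]
  exact mul_ne_zero (by norm_num) (mul_ne_zero hP hP)

lemma isThetaFunction_phi : IsThetaFunction τ (phi τ) :=
  ⟨differentiable_phi hτ, phi_add_one τ, phi_add hτ⟩

end phi

/-- If `f` is entire with `f(z + 1) = f(z)` and
`f(z + τ) = −e^{−2πiz} f(z)` for all `z` (where `Im τ > 0`), then `f` is a constant
multiple of `φ(τ, ·)`. -/
theorem eq_const_mul_phi_of_periodicity (τ : ℂ) (hτ : 0 < τ.im)
    (f : ℂ → ℂ) (hf : Differentiable ℂ f)
    (h1 : ∀ z : ℂ, f (z + 1) = f z)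
    (h2 : ∀ z : ℂ, f (z + τ) = -Complex.exp (-(2 * Real.pi * Complex.I * z)) * f z) :
    ∃ c : ℂ, ∀ z : ℂ, f z = c * phi τ z := by
  have hθf : IsThetaFunction τ f := ⟨hf, h1, h2⟩
  have hθφ := isThetaFunction_phi hτ
  have hφ0 : unitFourierCoeff (phi τ) 0 ≠ 0 := fun h0 =>
    phi_one_half_ne_zero hτ (congrFun (hθφ.eq_zero_of_unitFourierCoeff_zero_eq_zero h0) _)
  set c := unitFourierCoeff f 0 / unitFourierCoeff (phi τ) 0
  have hdiff := (hθf.sub_const_mul hθφ c).eq_zero_of_unitFourierCoeff_zero_eq_zero <| by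
    rw [unitFourierCoeff_sub_const_mul hf.continuous hθφ.differentiable.continuous,
      div_mul_cancel₀ _ hφ0, sub_self]
  exact ⟨c, fun z => sub_eq_zero.mp (congrFun hdiff z)⟩
end

section
/- For τ in the upper half plane, the function z ↦ φ(τ, z)/(e^{2πiz} − 1) tends to ∏_{n=1}^∞ (1 − qⁿ)² as z → 0 (z ≠ 0). In particular φ(τ, ·) has a simple zero at z = 0. -/
/-!
For `q_z ≠ 1` the quotient `φ(τ, z)/(q_z − 1)` is the infinite product
`P(q_z) · P(q_z⁻¹)` with `P(w) = ∏_{n ≥ 1} (1 − qⁿ w)`. Since `∑ |q|ⁿ < ∞`, the partial products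
of `P` converge uniformly on bounded sets, so `P` is continuous, and the product tends to
`P(1)² = ∏_{n ≥ 1} (1 − qⁿ)²` as `z → 0`. It only remains to note that `q_z ≠ 1` for
`0 < |z| < 1`.
-/

open Complex Filter Metric Topology

section TprodOneSubMul

variable {ι : Type*} {a : ι → ℂ}

theorem multipliable_one_sub_mul (ha : Summable (‖a ·‖)) (w : ℂ) :
    Multipliable fun i => 1 - a i * w := by
  simpa only [sub_eq_add_neg] using
    Complex.multipliable_one_add_of_summable (ha.of_norm.mul_right w).neg

theorem tprod_one_sub_mul_mul (ha : Summable (‖a ·‖)) (w v : ℂ) :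
    ∏' i, ((1 - a i * w) * (1 - a i * v)) = (∏' i, (1 - a i * w)) * ∏' i, (1 - a i * v) :=
  (multipliable_one_sub_mul ha w).tprod_mul (multipliable_one_sub_mul ha v)

theorem continuous_tprod_one_sub_mul (ha : Summable (‖a ·‖)) :
    Continuous fun w : ℂ => ∏' i, (1 - a i * w) := by
  refine continuous_iff_continuousAt.mpr fun w₀ => ?_
  set R := ‖w₀‖ + 1
  have hprod := Summable.hasProdUniformlyOn_one_add (f := fun i w => -(a i * w))
    (isCompact_closedBall 0 R) (ha.mul_right R) (.of_forall fun i w hw => ?bound)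
    (fun i => by fun_prop)
  case bound =>
    rw [norm_neg, norm_mul]
    exact mul_le_mul_of_nonneg_left (by simpa using hw) (norm_nonneg _)
  simp only [← sub_eq_add_neg, hasProdUniformlyOn_iff_tendstoUniformlyOn] at hprod
  refine (hprod.continuousOn (.of_forall fun s => by fun_prop)).continuousAt
    (closedBall_mem_nhds_of_mem ?_)
  simp [R]

end TprodOneSubMul

theorem eventually_exp_two_pi_I_mul_ne_one :
    ∀ᶠ z in 𝓝[≠] (0 : ℂ), exp (2 * Real.pi * I * z) ≠ 1 := by
  filter_upwards [mem_nhdsWithin_of_mem_nhds (ball_mem_nhds (0 : ℂ) one_pos),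
    self_mem_nhdsWithin] with z hz hz0 hexp
  obtain ⟨n, hn⟩ := exp_eq_one_iff.mp hexp
  have hzn : z = n := by
    have h2πI : 2 * (Real.pi : ℂ) * I ≠ 0 := by simp [Real.pi_ne_zero]
    exact mul_left_cancel₀ h2πI (by rw [hn]; ring)
  have hn0 : n ≠ 0 := by rintro rfl; simp_all
  have : (1 : ℝ) ≤ ‖z‖ := by rw [hzn, norm_intCast]; exact_mod_cast Int.one_le_abs hn0
  rw [mem_ball_zero_iff] at hz
  linarith

/-- For `τ` in the upper half plane, `φ(τ, z)/(e^{2πiz} − 1)` tends to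
`∏_{n ≥ 1} (1 − qⁿ)²` as `z → 0`, `z ≠ 0`; so `φ(τ, ·)` has a simple zero at `z = 0`. -/
theorem phi_div_tendsto_eta_squared (τ : ℂ) (hτ : 0 < τ.im) :
    Filter.Tendsto
      (fun z : ℂ => phi τ z / (Complex.exp (2 * Real.pi * Complex.I * z) - 1))
      (nhdsWithin 0 {(0 : ℂ)}ᶜ)
      (nhds (∏' n : ℕ, (1 - Complex.exp (2 * Real.pi * Complex.I * τ) ^ (n + 1)) ^ 2)) := by
  set q := exp (2 * Real.pi * I * τ)
  set e : ℂ → ℂ := fun z => exp (2 * Real.pi * I * z)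
  have hq : Summable fun n : ℕ => ‖q ^ (n + 1)‖ :=
    (summable_nat_add_iff 1).mpr <| summable_norm_geometric_of_norm_lt_one <|
      UpperHalfPlane.norm_exp_two_pi_I_lt_one ⟨τ, hτ⟩
  set P : ℂ → ℂ := fun w => ∏' n : ℕ, (1 - q ^ (n + 1) * w)
  have hP : Continuous P := continuous_tprod_one_sub_mul hq
  have hlim : Tendsto (fun z => P (e z) * P (e z)⁻¹) (𝓝 0) (𝓝 (P 1 * P 1)) := by
    have he : Continuous e := by fun_prop
    have hcont : Continuous fun z => P (e z) * P (e z)⁻¹ :=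
      (hP.comp he).mul (hP.comp (he.inv₀ fun z => exp_ne_zero _))
    simpa [e] using hcont.tendsto 0
  have hP1 : P 1 * P 1 = ∏' n : ℕ, (1 - q ^ (n + 1)) ^ 2 := by
    simpa only [P, mul_one, sq] using (tprod_one_sub_mul_mul hq 1 1).symm
  rw [← hP1]
  refine (hlim.mono_left nhdsWithin_le_nhds).congr' ?_
  filter_upwards [eventually_exp_two_pi_I_mul_ne_one] with z hz
  rw [phi, tprod_one_sub_mul_mul hq, mul_div_cancel_left₀ _ (sub_ne_zero.mpr hz)]
end

section
/- Let Φ be a CM type of K, i.e., a set of field embeddings K → ℂ containing, for each embedding σ of K, exactly one of σ and its complex conjugate. Then there exists ζ ∈ K with ρ(ζ) = −ζ and Im(σ(ζ)) > 0 for every σ ∈ Φ, where ρ is the nontrivial F-automorphism of K. -/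
/-!
Every embedding `σ` of `K` restricts to a real embedding of the totally real field `F` while `σ`
itself is not real, so the unique nontrivial `F`-automorphism `ρ` acts as complex conjugation
under every `σ`. A CM type contains at most one embedding over each infinite place of `K`, so weak
approximation at the infinite places gives `x ∈ K` with `Im σ x > 0` for all `σ ∈ Φ`; then
`ζ = x - ρ x` works, because `σ ζ = 2 i Im (σ x)`.
-/

open NumberField ComplexEmbedding InfinitePlace

namespace NumberField.ComplexEmbedding

variable {K : Type*} [Field K]

theorem exists_im_pos_of_not_isReal {φ : K →+* ℂ} (hφ : ¬IsReal φ) : ∃ x : K, 0 < (φ x).im := by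
  obtain ⟨x, hx⟩ : ∃ x, (φ x).im ≠ 0 := by
    contrapose! hφ
    exact RingHom.ext fun x ↦ Complex.conj_eq_iff_im.mpr (hφ x)
  rcases hx.lt_or_gt with hneg | hpos
  · exact ⟨-x, by simpa using hneg⟩
  · exact ⟨x, hpos⟩

theorem _root_.NumberField.InfinitePlace.isometry_comp_withAbsEquiv (φ : K →+* ℂ) :
    Isometry (φ.comp (WithAbs.equiv (InfinitePlace.mk φ).1).toRingHom) :=
  AddMonoidHomClass.isometry_of_norm _ fun _ ↦ rfl

theorem exists_forall_im_pos_of_conjugate_notMem [NumberField K] (Φ : Set (K →+* ℂ))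
    (hΦ : ∀ σ ∈ Φ, conjugate σ ∉ Φ) : ∃ x : K, ∀ σ ∈ Φ, 0 < (σ x).im := by
  have huniq : ∀ σ ∈ Φ, ∀ σ' ∈ Φ, InfinitePlace.mk σ = InfinitePlace.mk σ' → σ = σ' :=
    fun σ hσ σ' hσ' h ↦ (mk_eq_iff.mp h).resolve_right fun hc ↦ hΦ σ hσ (hc ▸ hσ')
  have hlocal (w : InfinitePlace K) : ∃ y : K, ∀ σ ∈ Φ, InfinitePlace.mk σ = w → 0 < (σ y).im := by
    by_cases hw : ∃ σ ∈ Φ, InfinitePlace.mk σ = w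
    · obtain ⟨σ, hσ, rfl⟩ := hw
      obtain ⟨y, hy⟩ := exists_im_pos_of_not_isReal (φ := σ) fun hr ↦
        hΦ σ hσ (by rwa [isReal_iff.mp hr])
      exact ⟨y, fun σ' hσ' h ↦ huniq σ hσ σ' hσ' h.symm ▸ hy⟩
    · exact ⟨0, fun σ hσ h ↦ absurd ⟨σ, hσ, h⟩ hw⟩
  choose y hy using hlocal
  let U : Set ((w : InfinitePlace K) → WithAbs w.1) :=
    ⋂ σ ∈ Φ, {f | 0 < (σ (WithAbs.equiv _ (f (InfinitePlace.mk σ)))).im}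
  have hU : IsOpen U := (Set.toFinite Φ).isOpen_biInter fun σ _ ↦
    isOpen_lt continuous_const <| Complex.continuous_im.comp <|
      (isometry_comp_withAbsEquiv σ).continuous.comp (continuous_apply _)
  obtain ⟨x, hx⟩ := (denseRange_algebraMap_pi K).exists_mem_open hU
    ⟨fun w ↦ WithAbs.toAbs _ (y w), Set.mem_iInter₂.mpr fun σ hσ ↦ hy _ σ hσ rfl⟩
  exact ⟨x, fun σ hσ ↦ Set.mem_iInter₂.mp hx σ hσ⟩

theorem isConj_of_finrank_eq_two {F : Type*} [Field F] [CharZero F] [Algebra F K]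
    (hdeg : Module.finrank F K = 2) {φ : K →+* ℂ} (hφ : IsMixed F φ)
    {ρ : K ≃ₐ[F] K} (hρ : ρ ≠ 1) : IsConj φ ρ := by
  have : Algebra.IsQuadraticExtension F K := ⟨hdeg⟩
  obtain ⟨σ, hσ⟩ := exists_isConj_of_isRamified hφ.mk_isRamified
  have hcard : Nat.card (K ≃ₐ[F] K) = 2 := hdeg ▸ IsGalois.card_aut_eq_finrank F K
  rw [Nat.card_eq_two_iff' 1] at hcard
  rwa [hcard.unique hρ ((isConj_ne_one_iff hσ).mpr hφ.2)]

end NumberField.ComplexEmbedding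

/-- Let `K` be a CM field over the totally real field `F`, with `ρ` the
nontrivial `F`-automorphism of `K`, and let `Φ` be a CM type of `K`, i.e. a set of complex
embeddings of `K` containing exactly one of each conjugate pair of embeddings. Then there
exists `ζ ∈ K` with `ρ ζ = −ζ` and `Im (σ ζ) > 0` for every `σ ∈ Φ`. -/
theorem exists_totally_imaginary_element_of_CMType
    (F K : Type*) [Field F] [Field K] [NumberField F] [NumberField K] [Algebra F K]
    (hF : ∀ v : InfinitePlace F, v.IsReal)
    (hK : ∀ v : InfinitePlace K, v.IsComplex)
    (hdeg : Module.finrank F K = 2)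
    (ρ : K ≃ₐ[F] K) (hρ : ρ ≠ AlgEquiv.refl)
    (Φ : Set (K →+* ℂ))
    (hΦ : ∀ σ : K →+* ℂ, Xor' (σ ∈ Φ) (NumberField.ComplexEmbedding.conjugate σ ∈ Φ)) :
    ∃ ζ : K, ρ ζ = -ζ ∧ ∀ σ ∈ Φ, 0 < (σ ζ).im := by
  have hconj (φ : K →+* ℂ) : IsConj φ ρ :=
    isConj_of_finrank_eq_two hdeg ⟨isReal_mk_iff.mp (hF _), isComplex_mk_iff.mp (hK _)⟩ hρ
  obtain ⟨x, hx⟩ := exists_forall_im_pos_of_conjugate_notMem Φ fun σ hσ ↦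
    (hΦ σ).elim And.right fun h ↦ absurd hσ h.2
  refine ⟨x - ρ x, ?_, fun σ hσ ↦ ?_⟩
  · obtain ⟨φ⟩ : Nonempty (K →+* ℂ) := inferInstance
    rw [map_sub, isConj_apply_apply (hconj φ), neg_sub]
  · have := hx σ hσ
    rw [map_sub, (hconj σ).eq, Complex.sub_im, Complex.star_def, Complex.conj_im]
    linarith
end
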